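/- Credit-aware state-distribution simulation. Let π and π' be policies of a finite-horizon MDP and τ > 0. Suppose π'_h(·|x) = π_h(·|x) for every h ∈ {1,…,H} and every x ∉ G_{h,τ}. Then for all α ∈ [0,1], the mixture policy π_α = (1−α)π + απ' satisfies Σ_{h=1}^H ‖d_{π_α}^h − d_π^h‖_TV ≤ α · H² · p_π. -/
import Mathlib


open Finset MeasureTheory

attribute [local instance] Classical.propDecidable

/-- A finite-horizon MDP with finite state space `X`, finite action space `Y`,
horizon `H ≥ 1`, initial distribution `μ`, transition kernels `P` and rewards `r`
(used for time steps `h ∈ {1, …, H}`). -/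
structure MDP (X Y : Type*) [Fintype X] [Fintype Y] where
  H : ℕ
  H_pos : 1 ≤ H
  μ : X → ℝ
  μ_nonneg : ∀ x, 0 ≤ μ x
  μ_sum_one : ∑ x, μ x = 1
  P : ℕ → X → Y → X → ℝ
  P_nonneg : ∀ h x y x', 0 ≤ P h x y x'
  P_sum_one : ∀ h x y, ∑ x', P h x y x' = 1
  r : ℕ → X → Y → ℝ

variable {X Y : Type*} [Fintype X] [Fintype Y]

/-- A policy assigns to each time step and state a probability distribution over actions. -/
def IsPolicy (M : MDP X Y) (π : ℕ → X → Y → ℝ) : Prop :=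
  (∀ h x y, 0 ≤ π h x y) ∧ ∀ h x, ∑ y, π h x y = 1

/-- Value function `V_h^π(x)`, defined by backwards recursion with `V_{H+1}^π ≡ 0`. -/
noncomputable def Vval (M : MDP X Y) (π : ℕ → X → Y → ℝ) (h : ℕ) (x : X) : ℝ :=
  if hh : M.H < h then 0
  else ∑ y, π h x y * (M.r h x y + ∑ x', M.P h x y x' * Vval M π (h + 1) x')
termination_by M.H + 1 - h
decreasing_by omega

/-- Action-value function `Q_h^π(x,y)`. -/
noncomputable def Qval (M : MDP X Y) (π : ℕ → X → Y → ℝ) (h : ℕ) (x : X) (y : Y) : ℝ :=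
  M.r h x y + ∑ x', M.P h x y x' * Vval M π (h + 1) x'

/-- Advantage function `A_h^π(x,y) = Q_h^π(x,y) − V_h^π(x)`. -/
noncomputable def Aval (M : MDP X Y) (π : ℕ → X → Y → ℝ) (h : ℕ) (x : X) (y : Y) : ℝ :=
  Qval M π h x y - Vval M π h x

/-- Time-`h` state distribution `d_π^h` (for `h ∈ {1, …, H}`), with `d_π^1 = μ`. -/
noncomputable def dState (M : MDP X Y) (π : ℕ → X → Y → ℝ) : ℕ → X → ℝ
  | 0 => M.μ
  | 1 => M.μ
  | (h + 2) => fun x' => ∑ x, ∑ y, dState M π (h + 1) x * π (h + 1) x y * M.P (h + 1) x y x'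

/-- Expected return `J(π)`. -/
noncomputable def J (M : MDP X Y) (π : ℕ → X → Y → ℝ) : ℝ :=
  ∑ x, M.μ x * Vval M π 1 x

/-- Policy advantage `𝔸_{π,μ}(π') = (1/H) Σ_h E_{x~d_π^h} E_{y~π'_h(·|x)}[A_h^π(x,y)]`. -/
noncomputable def polAdv (M : MDP X Y) (π π' : ℕ → X → Y → ℝ) : ℝ :=
  ((M.H : ℝ))⁻¹ * ∑ h ∈ Icc 1 M.H, ∑ x, dState M π h x * ∑ y, π' h x y * Aval M π h x y

/-- The `τ`-improvable set at time `h`: states where `max_y A_h^π(x,y) ≥ τ`. -/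
noncomputable def Gset (M : MDP X Y) (π : ℕ → X → Y → ℝ) (τ : ℝ) (h : ℕ) : Set X :=
  {x | τ ≤ ⨆ y, Aval M π h x y}

/-- `p_{π,h}`: probability of the `τ`-improvable set at time `h` under `d_π^h`. -/
noncomputable def pGh (M : MDP X Y) (π : ℕ → X → Y → ℝ) (τ : ℝ) (h : ℕ) : ℝ :=
  ∑ x, if x ∈ Gset M π τ h then dState M π h x else 0

/-- Coverage `p_π = (1/H) Σ_h p_{π,h}`. -/
noncomputable def coverage (M : MDP X Y) (π : ℕ → X → Y → ℝ) (τ : ℝ) : ℝ :=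
  ((M.H : ℝ))⁻¹ * ∑ h ∈ Icc 1 M.H, pGh M π τ h

/-- Conditional policy advantage on the improvable set,
`𝔸^G_{π,μ}(π') = E[A_h^π(x,y) | x ∈ G_{h,τ}]` with `h ~ Unif{1,…,H}`, `x ~ d_π^h`,
`y ~ π'_h(·|x)`. -/
noncomputable def condAdvG (M : MDP X Y) (π π' : ℕ → X → Y → ℝ) (τ : ℝ) : ℝ :=
  (((M.H : ℝ))⁻¹ * ∑ h ∈ Icc 1 M.H, ∑ x,
      if x ∈ Gset M π τ h then dState M π h x * ∑ y, π' h x y * Aval M π h x y else 0)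
    / coverage M π τ

/-- Conditional policy advantage off the improvable set,
`𝔸^{Gc}_{π,μ}(π') = E[A_h^π(x,y) | x ∉ G_{h,τ}]`. -/
noncomputable def condAdvGc (M : MDP X Y) (π π' : ℕ → X → Y → ℝ) (τ : ℝ) : ℝ :=
  (((M.H : ℝ))⁻¹ * ∑ h ∈ Icc 1 M.H, ∑ x,
      if x ∉ Gset M π τ h then dState M π h x * ∑ y, π' h x y * Aval M π h x y else 0)
    / (1 - coverage M π τ)

/-- Total-variation distance between two (finitely supported) distributions. -/
noncomputable def tvDist (p q : X → ℝ) : ℝ := (1 / 2) * ∑ x, |p x - q x|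

/-- The statewise mixture policy `π_α = (1−α)π + απ'`. -/
def mix (α : ℝ) (π π' : ℕ → X → Y → ℝ) : ℕ → X → Y → ℝ :=
  fun h x y => (1 - α) * π h x y + α * π' h x y

/-- `ε_CPI = max_{h ∈ {1,…,H}, x} |E_{y~π'_h(·|x)}[A_h^π(x,y)]|`. -/
noncomputable def epsCPI (M : MDP X Y) (π π' : ℕ → X → Y → ℝ) : ℝ :=
  ⨆ h : (Icc 1 M.H : Finset ℕ), ⨆ x : X, |∑ y, π' h.1 x y * Aval M π h.1 x y|

lemma dState_nonneg (M : MDP X Y) (π : ℕ → X → Y → ℝ) (hπ : ∀ h x y, 0 ≤ π h x y) :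
    ∀ h x, 0 ≤ dState M π h x
  | 0, x => M.μ_nonneg x
  | 1, x => M.μ_nonneg x
  | (m+2), x' => by
      apply Finset.sum_nonneg; intro x _
      apply Finset.sum_nonneg; intro y _
      exact mul_nonneg (mul_nonneg (dState_nonneg M π hπ (m+1) x) (hπ _ _ _))
        (M.P_nonneg _ _ _ _)

lemma tv_step (M : MDP X Y) (π π' : ℕ → X → Y → ℝ)
    (hπ : IsPolicy M π) (hπ' : IsPolicy M π')
    (τ : ℝ) (k : ℕ)
    (hagree : ∀ x, x ∉ Gset M π τ (k+1) → ∀ y, π' (k+1) x y = π (k+1) x y)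
    (α : ℝ) (hα0 : 0 ≤ α) (hα1 : α ≤ 1) :
    tvDist (dState M (mix α π π') (k+2)) (dState M π (k+2))
      ≤ tvDist (dState M (mix α π π') (k+1)) (dState M π (k+1)) + α * pGh M π τ (k+1) := by
  classical
  set h := k + 1 with hh
  have hsum_mix : ∀ x, ∑ y, mix α π π' h x y = 1 := by
    intro x
    simp [mix, Finset.sum_add_distrib, ← Finset.mul_sum, hπ.2, hπ'.2]
  have hmix_nonneg : ∀ x y, 0 ≤ mix α π π' h x y := fun x y =>
    add_nonneg (mul_nonneg (by linarith) (hπ.1 _ _ _)) (mul_nonneg hα0 (hπ'.1 _ _ _))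
  have hdnn : ∀ x, 0 ≤ dState M π h x := fun x => dState_nonneg M π hπ.1 h x
  set dα := dState M (mix α π π') h with hdα
  set dπ := dState M π h with hdπ
  have key : ∀ x', |dState M (mix α π π') (k+2) x' - dState M π (k+2) x'|
      ≤ ∑ x, ∑ y, (|dα x - dπ x| * mix α π π' h x y * M.P h x y x'
                   + dπ x * (α * |π' h x y - π h x y|) * M.P h x y x') := by
    intro x'
    have hexp : dState M (mix α π π') (k+2) x' - dState M π (k+2) x'
        = ∑ x, ∑ y, ((dα x - dπ x) * mix α π π' h x y * M.P h x y x'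
            + dπ x * (α * (π' h x y - π h x y)) * M.P h x y x') := by
      show (∑ x, ∑ y, dα x * mix α π π' h x y * M.P h x y x')
          - (∑ x, ∑ y, dπ x * π h x y * M.P h x y x') = _
      rw [← Finset.sum_sub_distrib]
      refine Finset.sum_congr rfl fun x _ => ?_
      rw [← Finset.sum_sub_distrib]
      refine Finset.sum_congr rfl fun y _ => ?_
      simp only [mix]; ring
    rw [hexp]
    calc |∑ x, ∑ y, ((dα x - dπ x) * mix α π π' h x y * M.P h x y x'
            + dπ x * (α * (π' h x y - π h x y)) * M.P h x y x')|
        ≤ ∑ x, |∑ y, ((dα x - dπ x) * mix α π π' h x y * M.P h x y x'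
            + dπ x * (α * (π' h x y - π h x y)) * M.P h x y x')| :=
          Finset.abs_sum_le_sum_abs _ _
      _ ≤ ∑ x, ∑ y, |((dα x - dπ x) * mix α π π' h x y * M.P h x y x'
            + dπ x * (α * (π' h x y - π h x y)) * M.P h x y x')| :=
          Finset.sum_le_sum fun x _ => Finset.abs_sum_le_sum_abs _ _
      _ ≤ _ := by
          refine Finset.sum_le_sum fun x _ => Finset.sum_le_sum fun y _ => ?_
          refine le_trans (abs_add_le _ _) ?_
          have e1 : |(dα x - dπ x) * mix α π π' h x y * M.P h x y x'|
              = |dα x - dπ x| * mix α π π' h x y * M.P h x y x' := by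
            rw [abs_mul, abs_mul, abs_of_nonneg (hmix_nonneg x y),
              abs_of_nonneg (M.P_nonneg _ _ _ _)]
          have e2 : |dπ x * (α * (π' h x y - π h x y)) * M.P h x y x'|
              = dπ x * (α * |π' h x y - π h x y|) * M.P h x y x' := by
            rw [abs_mul, abs_mul, abs_mul, abs_of_nonneg (hdnn x),
              abs_of_nonneg hα0, abs_of_nonneg (M.P_nonneg _ _ _ _)]
          rw [e1, e2]
  have step1 : tvDist (dState M (mix α π π') (k+2)) (dState M π (k+2))
      ≤ (1/2) * ∑ x', ∑ x, ∑ y, (|dα x - dπ x| * mix α π π' h x y * M.P h x y x'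
            + dπ x * (α * |π' h x y - π h x y|) * M.P h x y x') := by
    unfold tvDist
    have := Finset.sum_le_sum (fun x' (_ : x' ∈ Finset.univ) => key x')
    linarith
  have swap : ∑ x', ∑ x, ∑ y, (|dα x - dπ x| * mix α π π' h x y * M.P h x y x'
            + dπ x * (α * |π' h x y - π h x y|) * M.P h x y x')
      = ∑ x, ∑ y, ∑ x', (|dα x - dπ x| * mix α π π' h x y * M.P h x y x'
            + dπ x * (α * |π' h x y - π h x y|) * M.P h x y x') := by
    rw [Finset.sum_comm]
    exact Finset.sum_congr rfl fun x _ => Finset.sum_comm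
  have inner : ∀ x y, ∑ x', (|dα x - dπ x| * mix α π π' h x y * M.P h x y x'
            + dπ x * (α * |π' h x y - π h x y|) * M.P h x y x')
      = |dα x - dπ x| * mix α π π' h x y + dπ x * (α * |π' h x y - π h x y|) := by
    intro x y
    have : ∀ x', |dα x - dπ x| * mix α π π' h x y * M.P h x y x'
            + dπ x * (α * |π' h x y - π h x y|) * M.P h x y x'
        = (|dα x - dπ x| * mix α π π' h x y + dπ x * (α * |π' h x y - π h x y|))
            * M.P h x y x' := fun x' => by ring
    simp_rw [this, ← Finset.mul_sum, M.P_sum_one, mul_one]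
  have collapse : ∑ x, ∑ y, ∑ x', (|dα x - dπ x| * mix α π π' h x y * M.P h x y x'
            + dπ x * (α * |π' h x y - π h x y|) * M.P h x y x')
      = (∑ x, |dα x - dπ x|) + ∑ x, dπ x * (α * ∑ y, |π' h x y - π h x y|) := by
    simp_rw [inner]
    rw [← Finset.sum_add_distrib]
    refine Finset.sum_congr rfl fun x _ => ?_
    rw [Finset.sum_add_distrib, ← Finset.mul_sum, hsum_mix x, mul_one, ← Finset.mul_sum,
      ← Finset.mul_sum]
  have bnd : ∑ x, dπ x * ((1/2) * ∑ y, |π' h x y - π h x y|) ≤ pGh M π τ h := by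
    unfold pGh
    refine Finset.sum_le_sum fun x _ => ?_
    by_cases hG : x ∈ Gset M π τ h
    · rw [if_pos hG]
      have hle : (1/2) * ∑ y, |π' h x y - π h x y| ≤ 1 := by
        have : ∑ y, |π' h x y - π h x y| ≤ ∑ y, (π' h x y + π h x y) :=
          Finset.sum_le_sum fun y _ => by
            have := abs_sub (π' h x y) (π h x y)
            have h1 := abs_of_nonneg (hπ'.1 h x y)
            have h2 := abs_of_nonneg (hπ.1 h x y)
            calc |π' h x y - π h x y| ≤ |π' h x y| + |π h x y| := abs_sub _ _
              _ = π' h x y + π h x y := by rw [h1, h2]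
        rw [Finset.sum_add_distrib, hπ'.2, hπ.2] at this
        linarith
      calc dπ x * ((1/2) * ∑ y, |π' h x y - π h x y|) ≤ dπ x * 1 :=
            mul_le_mul_of_nonneg_left hle (hdnn x)
        _ = dπ x := mul_one _
    · rw [if_neg hG]
      have hz : ∀ y, |π' h x y - π h x y| = 0 := fun y => by
        rw [hagree x hG y, sub_self, abs_zero]
      simp [hz]
  have half_nonneg : ∀ x, 0 ≤ dπ x * ((1/2) * ∑ y, |π' h x y - π h x y|) := fun x =>
    mul_nonneg (hdnn x) (mul_nonneg (by norm_num)
      (Finset.sum_nonneg fun y _ => abs_nonneg _))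
  calc tvDist (dState M (mix α π π') (k+2)) (dState M π (k+2))
      ≤ (1/2) * ((∑ x, |dα x - dπ x|) + ∑ x, dπ x * (α * ∑ y, |π' h x y - π h x y|)) := by
        rw [← collapse, ← swap]; exact step1
    _ = tvDist dα dπ + α * ∑ x, dπ x * ((1/2) * ∑ y, |π' h x y - π h x y|) := by
        unfold tvDist
        rw [mul_add]
        congr 1
        rw [Finset.mul_sum, Finset.mul_sum]
        exact Finset.sum_congr rfl fun x _ => by ring
    _ ≤ tvDist dα dπ + α * pGh M π τ h := by
        have := mul_le_mul_of_nonneg_left bnd hα0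
        linarith

/-- **Credit-aware state-distribution simulation.**
If `π'` agrees with `π` off the improvable sets, then for `α ∈ [0,1]` the mixture
`π_α = (1−α)π + απ'` satisfies `Σ_{h=1}^H ‖d_{π_α}^h − d_π^h‖_TV ≤ α·H²·p_π`. -/
theorem credit_aware_simulation
    {X Y : Type*} [Fintype X] [Fintype Y] [Nonempty X] [Nonempty Y]
    (M : MDP X Y) (π π' : ℕ → X → Y → ℝ)
    (hπ : IsPolicy M π) (hπ' : IsPolicy M π')
    (τ : ℝ) (hτ : 0 < τ)
    (hagree : ∀ h ∈ Icc 1 M.H, ∀ x, x ∉ Gset M π τ h → ∀ y, π' h x y = π h x y)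
    (α : ℝ) (hα : α ∈ Set.Icc (0 : ℝ) 1) :
    ∑ h ∈ Icc 1 M.H, tvDist (dState M (mix α π π') h) (dState M π h)
      ≤ α * (M.H : ℝ) ^ 2 * coverage M π τ := by
  classical
  obtain ⟨hα0, hα1⟩ := hα
  have HposN : 1 ≤ M.H := M.H_pos
  have Hpos : (0:ℝ) < (M.H : ℝ) := by exact_mod_cast Nat.lt_of_lt_of_le Nat.zero_lt_one HposN
  have pnn : ∀ t, 0 ≤ pGh M π τ t := by
    intro t
    refine Finset.sum_nonneg fun x _ => ?_
    split
    · exact dState_nonneg M π hπ.1 t x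
    · exact le_refl 0
  have bound : ∀ k, k + 1 ≤ M.H →
      tvDist (dState M (mix α π π') (k+1)) (dState M π (k+1))
        ≤ α * ∑ t ∈ Icc 1 k, pGh M π τ t := by
    intro k
    induction k with
    | zero =>
        intro _
        have h1 : dState M (mix α π π') 1 = M.μ := rfl
        have h2 : dState M π 1 = M.μ := rfl
        simp [h1, h2, tvDist]
    | succ n ih =>
        intro hk
        have hstep := tv_step M π π' hπ hπ' τ n
          (hagree (n+1) (by simp [Finset.mem_Icc]; omega)) α hα0 hα1
        have h2 := ih (by omega)
        have h3 : ∑ t ∈ Icc 1 (n+1), pGh M π τ t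
            = (∑ t ∈ Icc 1 n, pGh M π τ t) + pGh M π τ (n+1) :=
          Finset.sum_Icc_succ_top (by omega) _
        rw [h3, mul_add]
        calc tvDist (dState M (mix α π π') (n+1+1)) (dState M π (n+1+1))
            ≤ tvDist (dState M (mix α π π') (n+1)) (dState M π (n+1))
              + α * pGh M π τ (n+1) := hstep
          _ ≤ α * ∑ t ∈ Icc 1 n, pGh M π τ t + α * pGh M π τ (n+1) := by linarith
  set S := ∑ t ∈ Icc 1 M.H, pGh M π τ t with hS
  have hSnn : 0 ≤ S := Finset.sum_nonneg fun t _ => pnn t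
  have hfull : ∀ k, k ≤ M.H → ∑ t ∈ Icc 1 k, pGh M π τ t ≤ S :=
    fun k hk => Finset.sum_le_sum_of_subset_of_nonneg
      (Finset.Icc_subset_Icc_right hk) (fun t _ _ => pnn t)
  have main : ∑ h ∈ Icc 1 M.H, tvDist (dState M (mix α π π') h) (dState M π h)
      ≤ ∑ _h ∈ Icc 1 M.H, α * S := by
    refine Finset.sum_le_sum fun h hh => ?_
    rw [Finset.mem_Icc] at hh
    obtain ⟨k, rfl⟩ : ∃ k, h = k + 1 := ⟨h - 1, by omega⟩
    calc tvDist (dState M (mix α π π') (k+1)) (dState M π (k+1))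
        ≤ α * ∑ t ∈ Icc 1 k, pGh M π τ t := bound k hh.2
      _ ≤ α * S := mul_le_mul_of_nonneg_left (hfull k (by omega)) hα0
  rw [Finset.sum_const, Nat.card_Icc, nsmul_eq_mul] at main
  have hcard : ((M.H + 1 - 1 : ℕ) : ℝ) = (M.H : ℝ) := by norm_num
  rw [hcard] at main
  have hcov : coverage M π τ = ((M.H : ℝ))⁻¹ * S := rfl
  have : α * (M.H : ℝ) ^ 2 * coverage M π τ = (M.H : ℝ) * (α * S) := by
    rw [hcov]
    field_simp
  linarith [main, this.ge]
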